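/- arXiv:2304.04184 — 3 statements merged into one kernel-verified Lean document; each statement's English description precedes it below -/
import Mathlib

section
/- Let Ω ⊂ ℝⁿ be open and convex and let U₁,...,U_N ⊂ Ω be open convex sets with Ω ⊆ ⋃ᵢ Uᵢ. Then for every function u : Ω → ℝ and every γ ∈ (0,1), the Hölder seminorm satisfies [u]_{γ,Ω} ≤ Σᵢ₌₁^N [u]_{γ,Uᵢ}, where [u]_{γ,S} := sup_{x≠y∈S} |u(x)-u(y)|/|x-y|^γ. -/
open scoped ENNReal

/-- Euclidean norm on `Fin n → ℝ`. -/
noncomputable def enr {n : ℕ} (x : Fin n → ℝ) : ℝ := Real.sqrt (∑ i, (x i) ^ 2)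

/-- The Hölder seminorm `[u]_{γ,S} = sup_{x ≠ y ∈ S} |u x - u y| / |x - y|^γ`,
valued in `ℝ≥0∞` (the sup may be infinite). -/
noncomputable def holderSemi {n : ℕ} (γ : ℝ) (S : Set (Fin n → ℝ))
    (u : (Fin n → ℝ) → ℝ) : ℝ≥0∞ :=
  ⨆ x ∈ S, ⨆ y ∈ S, ⨆ _ : x ≠ y, ENNReal.ofReal (|u x - u y| / enr (x - y) ^ γ)

lemma enr_nonneg {n : ℕ} (x : Fin n → ℝ) : 0 ≤ enr x := Real.sqrt_nonneg _

lemma enr_pos {n : ℕ} {x : Fin n → ℝ} (h : x ≠ 0) : 0 < enr x := by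
  obtain ⟨i, hi⟩ := Function.ne_iff.mp h
  refine Real.sqrt_pos.mpr (lt_of_lt_of_le ?_ (Finset.single_le_sum (f := fun j => x j ^ 2)
    (fun j _ => sq_nonneg _) (Finset.mem_univ i)))
  have : x i ≠ 0 := by simpa using hi
  positivity

lemma enr_smul {n : ℕ} (c : ℝ) (x : Fin n → ℝ) : enr (c • x) = |c| * enr x := by
  unfold enr
  simp only [Pi.smul_apply, smul_eq_mul, mul_pow]
  rw [← Finset.mul_sum, Real.sqrt_mul (sq_nonneg c), Real.sqrt_sq_eq_abs]

lemma enr_sub_comm {n : ℕ} (x y : Fin n → ℝ) : enr (x - y) = enr (y - x) := by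
  have : y - x = (-1 : ℝ) • (x - y) := by funext k; simp [neg_sub]
  rw [this, enr_smul]; simp

/-- Chain lemma: if `Icc a b` is covered by open sets `I i`, `i ∈ s`, and any two points
of `I i ∩ [0,1]` have `|v p - v q| ≤ d i`, then `|v b - v a| ≤ ∑ i ∈ s, d i`. -/
lemma chain_bound {N : ℕ} (I : Fin N → Set ℝ) (hIo : ∀ i, IsOpen (I i))
    (v : ℝ → ℝ) (d : Fin N → ℝ) (hd : ∀ i, 0 ≤ d i)
    (H : ∀ i, ∀ p ∈ I i ∩ Set.Icc (0:ℝ) 1, ∀ q ∈ I i ∩ Set.Icc (0:ℝ) 1, |v p - v q| ≤ d i) :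
    ∀ (s : Finset (Fin N)) (a b : ℝ), 0 ≤ a → a ≤ b → b ≤ 1 →
      Set.Icc a b ⊆ ⋃ i ∈ s, I i → |v b - v a| ≤ ∑ i ∈ s, d i := by
  intro s
  induction s using Finset.strongInductionOn with
  | _ s ih =>
    intro a b ha hab hb1 hcov
    have haab : a ∈ Set.Icc a b := ⟨le_rfl, hab⟩
    obtain ⟨i, his, hai⟩ : ∃ i ∈ s, a ∈ I i := by simpa using hcov haab
    have ha01 : a ∈ Set.Icc (0:ℝ) 1 := ⟨ha, hab.trans hb1⟩
    have hb01 : b ∈ Set.Icc (0:ℝ) 1 := ⟨ha.trans hab, hb1⟩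
    by_cases hbi : b ∈ I i
    · exact le_trans (H i b ⟨hbi, hb01⟩ a ⟨hai, ha01⟩)
        (Finset.single_le_sum (fun j _ => hd j) his)
    · set T : Set ℝ := {t | t ∈ Set.Icc a b ∧ t ∈ I i} with hT
      have hTne : a ∈ T := ⟨haab, hai⟩
      have hTbdd : BddAbove T := ⟨b, fun t ht => ht.1.2⟩
      set σ := sSup T with hσ
      have hσle : σ ≤ b := csSup_le ⟨a, hTne⟩ (fun t ht => ht.1.2)
      have haσ : a ≤ σ := le_csSup hTbdd hTne
      have hσab : σ ∈ Set.Icc a b := ⟨haσ, hσle⟩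
      have hσni : σ ∉ I i := by
        intro h
        have hσb : σ < b := lt_of_le_of_ne hσle (fun he => hbi (he ▸ h))
        obtain ⟨ε, hε, hball⟩ := Metric.isOpen_iff.mp (hIo i) σ h
        set t := min (σ + ε/2) b with ht
        have htσ : σ < t := lt_min (by linarith) hσb
        have htb : t ≤ b := min_le_right _ _
        have htI : t ∈ I i := by
          apply hball
          rw [Metric.mem_ball, Real.dist_eq, abs_of_nonneg (by linarith [le_min (le_of_lt (by linarith : σ < σ + ε/2)) hσb.le] : (0:ℝ) ≤ t - σ)]
          have : t ≤ σ + ε/2 := min_le_left _ _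
          linarith
        have : t ∈ T := ⟨⟨haσ.trans htσ.le, htb⟩, htI⟩
        exact absurd (le_csSup hTbdd this) (not_le.mpr htσ)
      obtain ⟨j, hjs, hσj⟩ : ∃ j ∈ s, σ ∈ I j := by simpa using hcov hσab
      have hji : j ≠ i := fun he => hσni (he ▸ hσj)
      obtain ⟨ε, hε, hball⟩ := Metric.isOpen_iff.mp (hIo j) σ hσj
      obtain ⟨t₁, ht₁T, ht₁lt⟩ : ∃ t₁ ∈ T, σ - ε < t₁ :=
        exists_lt_of_lt_csSup ⟨a, hTne⟩ (by linarith)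
      have ht₁σ : t₁ ≤ σ := le_csSup hTbdd ht₁T
      have ht₁01 : t₁ ∈ Set.Icc (0:ℝ) 1 := ⟨ha.trans ht₁T.1.1, ht₁T.1.2.trans hb1⟩
      have hcov2 : Set.Icc t₁ b ⊆ ⋃ i' ∈ s.erase i, I i' := by
        intro t htm
        have htab : t ∈ Set.Icc a b := ⟨ht₁T.1.1.trans htm.1, htm.2⟩
        obtain ⟨j', hj's, htj'⟩ : ∃ j' ∈ s, t ∈ I j' := by simpa using hcov htab
        by_cases hj'i : j' = i
        · subst hj'i
          have htT : t ∈ T := ⟨htab, htj'⟩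
          have htσ : t ≤ σ := le_csSup hTbdd htT
          have htne : t ≠ σ := fun he => hσni (he ▸ htj')
          have htj : t ∈ I j := by
            apply hball
            rw [Metric.mem_ball, Real.dist_eq, abs_of_nonpos (by linarith : t - σ ≤ 0)]
            have : σ - ε < t := lt_of_lt_of_le ht₁lt htm.1
            have : t < σ := lt_of_le_of_ne htσ htne
            linarith
          exact Set.mem_biUnion (Finset.mem_erase.mpr ⟨hji, hjs⟩) htj
        · exact Set.mem_biUnion (Finset.mem_erase.mpr ⟨hj'i, hj's⟩) htj'
      have h1 : |v t₁ - v a| ≤ d i := H i t₁ ⟨ht₁T.2, ht₁01⟩ a ⟨hai, ha01⟩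
      have h2 : |v b - v t₁| ≤ ∑ i' ∈ s.erase i, d i' :=
        ih (s.erase i) (Finset.erase_ssubset his) t₁ b ht₁01.1 ht₁T.1.2 hb1 hcov2
      calc |v b - v a| ≤ |v b - v t₁| + |v t₁ - v a| := abs_sub_le _ _ _
        _ ≤ (∑ i' ∈ s.erase i, d i') + d i := add_le_add h2 h1
        _ = ∑ i' ∈ s, d i' := Finset.sum_erase_add s d his

/-- If `Ω ⊆ ℝⁿ` is open and convex and `U₁, …, U_N ⊆ Ω` are open convex sets covering `Ω`,
then `[u]_{γ,Ω} ≤ Σᵢ [u]_{γ,Uᵢ}` for every `u : Ω → ℝ` and every `γ ∈ (0,1)`. -/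
theorem holder_seminorm_subadditive_on_convex_cover
    {n N : ℕ} (Ω : Set (Fin n → ℝ)) (U : Fin N → Set (Fin n → ℝ))
    (hΩo : IsOpen Ω) (hΩc : Convex ℝ Ω)
    (hUo : ∀ i, IsOpen (U i)) (hUc : ∀ i, Convex ℝ (U i)) (hUΩ : ∀ i, U i ⊆ Ω)
    (hcover : Ω ⊆ ⋃ i, U i)
    (u : (Fin n → ℝ) → ℝ) (γ : ℝ) (hγ : γ ∈ Set.Ioo (0:ℝ) 1) :
    holderSemi γ Ω u ≤ ∑ i, holderSemi γ (U i) u := by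
  obtain ⟨hγ0, hγ1⟩ := hγ
  by_cases hfin : ∀ i, holderSemi γ (U i) u ≠ ⊤
  swap
  · push_neg at hfin
    obtain ⟨i, hi⟩ := hfin
    have : ∑ i, holderSemi γ (U i) u = ⊤ := by
      rw [ENNReal.sum_eq_top]
      exact ⟨i, Finset.mem_univ i, hi⟩
    rw [this]; exact le_top
  set c : Fin N → ℝ := fun i => (holderSemi γ (U i) u).toReal with hc
  have hcnn : ∀ i, 0 ≤ c i := fun i => ENNReal.toReal_nonneg
  -- key pointwise Hölder bound on each U i
  have hkey : ∀ i, ∀ p ∈ U i, ∀ q ∈ U i, |u p - u q| ≤ c i * enr (p - q) ^ γ := by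
    intro i p hp q hq
    rcases eq_or_ne p q with rfl | hpq
    · have : enr (p - p) = 0 := by
        simp [enr, sub_self]
      calc |u p - u p| = 0 := by simp
        _ ≤ c i * enr (p - p) ^ γ := by
            rw [this, Real.zero_rpow (ne_of_gt hγ0), mul_zero]
    · have hD : 0 < enr (p - q) ^ γ :=
        Real.rpow_pos_of_pos (enr_pos (sub_ne_zero.mpr hpq)) γ
      have h1 : ENNReal.ofReal (|u p - u q| / enr (p - q) ^ γ) ≤ holderSemi γ (U i) u := by
        unfold holderSemi
        exact le_iSup₂_of_le p hp <| le_iSup₂_of_le q hq <| le_iSup_of_le hpq le_rfl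
      have h2 : |u p - u q| / enr (p - q) ^ γ ≤ c i := by
        have := ENNReal.toReal_mono (hfin i) h1
        rwa [ENNReal.toReal_ofReal (by positivity)] at this
      exact (div_le_iff₀ hD).mp h2
  have hsum : ∑ i, holderSemi γ (U i) u = ENNReal.ofReal (∑ i, c i) := by
    rw [ENNReal.ofReal_sum_of_nonneg (fun i _ => hcnn i)]
    exact Finset.sum_congr rfl fun i _ => (ENNReal.ofReal_toReal (hfin i)).symm
  rw [hsum]
  unfold holderSemi
  refine iSup₂_le fun x hx => iSup₂_le fun y hy => iSup_le fun hxy => ?_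
  apply ENNReal.ofReal_le_ofReal
  set L := enr (x - y) with hLdef
  have hL : 0 < L := enr_pos (sub_ne_zero.mpr hxy)
  have hLγ : 0 < L ^ γ := Real.rpow_pos_of_pos hL γ
  rw [div_le_iff₀ hLγ]
  -- segment parametrization
  set φ : ℝ → (Fin n → ℝ) := fun t => x + t • (y - x) with hφ
  have hφc : Continuous φ := by fun_prop
  set I : Fin N → Set ℝ := fun i => φ ⁻¹' (U i) with hI
  have hIo : ∀ i, IsOpen (I i) := fun i => (hUo i).preimage hφc
  have hφsub : ∀ p q : ℝ, φ p - φ q = (p - q) • (y - x) := by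
    intro p q; funext k; simp [hφ]; ring
  have H : ∀ i, ∀ p ∈ I i ∩ Set.Icc (0:ℝ) 1, ∀ q ∈ I i ∩ Set.Icc (0:ℝ) 1,
      |u (φ p) - u (φ q)| ≤ c i * L ^ γ := by
    intro i p hp q hq
    refine le_trans (hkey i (φ p) hp.1 (φ q) hq.1) ?_
    refine mul_le_mul_of_nonneg_left ?_ (hcnn i)
    apply Real.rpow_le_rpow (enr_nonneg _) ?_ hγ0.le
    rw [hφsub, enr_smul]
    have hpq1 : |p - q| ≤ 1 := by
      rw [abs_sub_le_iff]
      constructor <;> [linarith [hp.2.1, hp.2.2, hq.2.1, hq.2.2]; linarith [hp.2.1, hp.2.2, hq.2.1, hq.2.2]]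
    calc |p - q| * enr (y - x) ≤ 1 * enr (y - x) :=
          mul_le_mul_of_nonneg_right hpq1 (enr_nonneg _)
      _ = L := by rw [one_mul, ← enr_sub_comm]
  have hcov01 : Set.Icc (0:ℝ) 1 ⊆ ⋃ i ∈ (Finset.univ : Finset (Fin N)), I i := by
    intro t ht
    have hφt : φ t ∈ Ω := by
      have := hΩc hx hy (by linarith [ht.1, ht.2] : (0:ℝ) ≤ 1 - t) ht.1 (by ring)
      convert this using 1
      funext k; simp [hφ]; ring
    obtain ⟨i, hi⟩ := Set.mem_iUnion.mp (hcover hφt)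
    exact Set.mem_biUnion (Finset.mem_univ i) hi
  have := chain_bound I hIo (fun t => u (φ t)) (fun i => c i * L ^ γ)
    (fun i => by positivity) H Finset.univ 0 1 le_rfl zero_le_one le_rfl hcov01
  have hφ0 : φ 0 = x := by funext k; simp [hφ]
  have hφ1 : φ 1 = y := by funext k; simp [hφ]
  simp only [hφ0, hφ1] at this
  calc |u x - u y| = |u y - u x| := abs_sub_comm _ _
    _ ≤ ∑ i, c i * L ^ γ := this
    _ = (∑ i, c i) * L ^ γ := (Finset.sum_mul _ _ _).symm
end

section
/- (Simon's Absorption Lemma) Let R > 0, p₀ ∈ ℝⁿ × ℝ, A ⊆ ℝⁿ × ℝ convex, and set Ω_ρ(p) := U_ρ(p) ∩ A where U_ρ(p) is the parabolic ball of radius ρ. Let S be a nonnegative, monotone, subadditive set function on the class {Ω_ρ(p) : ρ > 0, p ∈ ℝⁿ × ℝ}. Let k ∈ ℝ, ν ∈ (0,1], θ ∈ (0,1), E > 0. There exist δ(n,θ) > 0 and C = C(n,k,ν,θ) with: if for all Ω_ρ(y) ⊆ Ω_R(p₀) with ρ ≤ νR we have ρᵏ S(Ω_{θρ}(y)) ≤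 δ ρᵏ S(Ω_ρ(y)) + E, then Rᵏ S(Ω_{θR}(p₀)) ≤ C E. -/
/-- The parabolic ball `U_ρ(p) = {q : max(|q₁ − p₁|, |q₂ − p₂|^{1/4}) < ρ}`. -/
def pball {n : ℕ} (p : (Fin n → ℝ) × ℝ) (ρ : ℝ) : Set ((Fin n → ℝ) × ℝ) :=
  {q | enr (q.1 - p.1) < ρ ∧ |q.2 - p.2| < ρ ^ 4}

/-!
By compactness and parabolic scaling, every closed parabolic ball of radius `ρ` is covered by a
number of parabolic balls of radius `c ρ`, centred in it, that depends only on `n` and `c`.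
Take `δ` with `δ N ≤ 1/2`, where `N` is this number for `c = θ`. At a fixed scale `σ`, each use
of the absorption inequality followed by such a cover halves the bound on `S(Ω_{θσ}(z))`, up to
`2σ^{-k}E`, at the price of moving `z` inward by `σ`. After `m` steps, one cover by balls of half
the radius passes to the scale `σ/2` at the cost of a factor `N'`, so the old bound gets multiplied
by `β = N'/2^m`. With `m` large, `β` beats the growth `2^k` of `σ^{-k}E`, and induction from the
trivial bound `S(Ω_R(p₀))` gives `β^L S(Ω_R(p₀)) + 4σ^{-k}E` for every `L`, hence `4σ^{-k}E`, at
all scales `σ ≤ τR` for centres well inside `Ω_R(p₀)`. A final cover of `Ω_{θR}(p₀)` by balls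
of radius `τθR` finishes the proof.
-/

namespace SimonAbsorption

variable {n : ℕ}

theorem enr_eq_norm (x : Fin n → ℝ) : enr x = ‖WithLp.toLp 2 x‖ := by
  simp [enr, EuclideanSpace.norm_eq, sq_abs]

theorem continuous_enr : Continuous (enr : (Fin n → ℝ) → ℝ) := by
  simp_rw [funext enr_eq_norm]
  exact (PiLp.continuous_toLp 2 _).norm

theorem enr_smul (a : ℝ) (x : Fin n → ℝ) : enr (a • x) = |a| * enr x := by
  simp only [enr_eq_norm, WithLp.toLp_smul, norm_smul, Real.norm_eq_abs]

theorem enr_sub_le (x y z : Fin n → ℝ) : enr (x - z) ≤ enr (x - y) + enr (y - z) := by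
  simpa only [enr_eq_norm, WithLp.toLp_sub] using norm_sub_le_norm_sub_add_norm_sub _ _ _

theorem enr_nonneg (x : Fin n → ℝ) : 0 ≤ enr x := Real.sqrt_nonneg _

def pcball (p : (Fin n → ℝ) × ℝ) (ρ : ℝ) : Set ((Fin n → ℝ) × ℝ) :=
  {q | enr (q.1 - p.1) ≤ ρ ∧ |q.2 - p.2| ≤ ρ ^ 4}

theorem nonneg_of_mem_pcball {p q : (Fin n → ℝ) × ℝ} {ρ : ℝ} (hq : q ∈ pcball p ρ) : 0 ≤ ρ :=
  (enr_nonneg _).trans hq.1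

theorem pball_subset_pcball (p : (Fin n → ℝ) × ℝ) (ρ : ℝ) : pball p ρ ⊆ pcball p ρ :=
  fun _ hq => ⟨hq.1.le, hq.2.le⟩

theorem pcball_mono (p : (Fin n → ℝ) × ℝ) {ρ₁ ρ₂ : ℝ} (h : ρ₁ ≤ ρ₂) :
    pcball p ρ₁ ⊆ pcball p ρ₂ := fun _ hq =>
  ⟨hq.1.trans h, hq.2.trans (pow_le_pow_left₀ (nonneg_of_mem_pcball hq) h 4)⟩

theorem pball_mono (p : (Fin n → ℝ) × ℝ) {ρ₁ ρ₂ : ℝ} (h : ρ₁ ≤ ρ₂) :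
    pball p ρ₁ ⊆ pball p ρ₂ := fun _ hq =>
  ⟨hq.1.trans_le h, hq.2.trans_le (pow_le_pow_left₀ ((enr_nonneg _).trans hq.1.le) h 4)⟩

theorem abs_sub_le_pow_add {a b c s t : ℝ} (hs : 0 ≤ s) (ht : 0 ≤ t)
    (hab : |a - b| ≤ s ^ 4) (hbc : |b - c| ≤ t ^ 4) : |a - c| ≤ (s + t) ^ 4 :=
  calc |a - c| ≤ |a - b| + |b - c| := abs_sub_le a b c
    _ ≤ s ^ 4 + t ^ 4 := add_le_add hab hbc
    _ ≤ (s + t) ^ 4 := pow_add_pow_le hs ht (by norm_num)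

theorem mem_pcball_add {p z w : (Fin n → ℝ) × ℝ} {a s : ℝ}
    (hz : z ∈ pcball p a) (hw : w ∈ pcball z s) : w ∈ pcball p (s + a) :=
  ⟨(enr_sub_le _ _ _).trans (add_le_add hw.1 hz.1),
    abs_sub_le_pow_add (nonneg_of_mem_pcball hw) (nonneg_of_mem_pcball hz) hw.2 hz.2⟩

theorem pball_subset_pball_of_mem_pcball {p z : (Fin n → ℝ) × ℝ} {a s : ℝ}
    (hz : z ∈ pcball p a) : pball z s ⊆ pball p (s + a) := fun q hq => by
  have hs : 0 ≤ s := (enr_nonneg _).trans hq.1.le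
  have ha := nonneg_of_mem_pcball hz
  refine ⟨(enr_sub_le _ _ _).trans_lt (add_lt_add_of_lt_of_le hq.1 hz.1), ?_⟩
  calc |q.2 - p.2| ≤ |q.2 - z.2| + |z.2 - p.2| := abs_sub_le _ _ _
    _ < s ^ 4 + a ^ 4 := add_lt_add_of_lt_of_le hq.2 hz.2
    _ ≤ (s + a) ^ 4 := pow_add_pow_le hs ha (by norm_num)

theorem isOpen_pball (p : (Fin n → ℝ) × ℝ) (ρ : ℝ) : IsOpen (pball p ρ) :=
  (isOpen_lt (continuous_enr.comp (continuous_fst.sub continuous_const)) continuous_const).inter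
    (isOpen_lt (continuous_snd.sub continuous_const).abs continuous_const)

theorem isClosed_pcball (p : (Fin n → ℝ) × ℝ) (ρ : ℝ) : IsClosed (pcball p ρ) :=
  (isClosed_le (continuous_enr.comp (continuous_fst.sub continuous_const)) continuous_const).inter
    (isClosed_le (continuous_snd.sub continuous_const).abs continuous_const)

theorem isCompact_pcball (p : (Fin n → ℝ) × ℝ) (ρ : ℝ) : IsCompact (pcball p ρ) := by
  let f : EuclideanSpace ℝ (Fin n) × ℝ → (Fin n → ℝ) × ℝ := fun q => (q.1.ofLp + p.1, q.2 + p.2)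
  have hf : Continuous f := by fun_prop
  refine ((isCompact_closedBall 0 ρ).prod (isCompact_closedBall 0 (ρ ^ 4))).image hf
    |>.of_isClosed_subset (isClosed_pcball p ρ) fun q hq =>
      ⟨(WithLp.toLp 2 (q.1 - p.1), q.2 - p.2), ?_, ?_⟩
  · simpa [pcball, enr_eq_norm] using hq
  · simp [f]

def pdil (z : (Fin n → ℝ) × ℝ) (ρ : ℝ) (w : (Fin n → ℝ) × ℝ) : (Fin n → ℝ) × ℝ :=
  (z.1 + ρ • w.1, z.2 + ρ ^ 4 * w.2)

theorem pdil_zero (z : (Fin n → ℝ) × ℝ) (ρ : ℝ) : pdil z ρ 0 = z := by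
  simp [pdil]

theorem pdil_surjective (z : (Fin n → ℝ) × ℝ) {ρ : ℝ} (hρ : ρ ≠ 0) :
    Function.Surjective (pdil z ρ) :=
  fun q => ⟨(ρ⁻¹ • (q.1 - z.1), (q.2 - z.2) / ρ ^ 4), by
    simp [pdil, smul_inv_smul₀ hρ, mul_div_cancel₀ _ (pow_ne_zero 4 hρ)]⟩

theorem pdil_mem_pball_pdil_iff {z v w : (Fin n → ℝ) × ℝ} {ρ c : ℝ} (hρ : 0 < ρ) :
    pdil z ρ v ∈ pball (pdil z ρ w) (c * ρ) ↔ v ∈ pball w c := by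
  have h4 : 0 < ρ ^ 4 := by positivity
  simp only [pball, Set.mem_ofPred_eq, pdil, add_sub_add_left_eq_sub, ← smul_sub, ← mul_sub,
    enr_smul, abs_mul, abs_of_pos hρ, abs_of_pos h4, mul_pow]
  rw [mul_comm c, mul_lt_mul_iff_right₀ hρ, mul_comm (c ^ 4), mul_lt_mul_iff_right₀ h4]

theorem pdil_mem_pcball_pdil_iff {z v w : (Fin n → ℝ) × ℝ} {ρ c : ℝ} (hρ : 0 < ρ) :
    pdil z ρ v ∈ pcball (pdil z ρ w) (c * ρ) ↔ v ∈ pcball w c := by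
  have h4 : 0 < ρ ^ 4 := by positivity
  simp only [pcball, Set.mem_ofPred_eq, pdil, add_sub_add_left_eq_sub, ← smul_sub, ← mul_sub,
    enr_smul, abs_mul, abs_of_pos hρ, abs_of_pos h4, mul_pow]
  rw [mul_comm c, mul_le_mul_iff_right₀ hρ, mul_comm (c ^ 4), mul_le_mul_iff_right₀ h4]

theorem pdil_mem_pcball_iff {z v : (Fin n → ℝ) × ℝ} {ρ : ℝ} (hρ : 0 < ρ) :
    pdil z ρ v ∈ pcball z ρ ↔ v ∈ pcball 0 1 := by
  simpa only [pdil_zero, one_mul] using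
    pdil_mem_pcball_pdil_iff (z := z) (v := v) (w := 0) (c := 1) hρ

theorem mem_pball_self (p : (Fin n → ℝ) × ℝ) {ρ : ℝ} (hρ : 0 < ρ) : p ∈ pball p ρ :=
  ⟨by simpa [enr] using hρ, by simpa using pow_pos hρ 4⟩

def HasParabolicCover (n : ℕ) (c : ℝ) (N : ℕ) : Prop :=
  ∀ (z : (Fin n → ℝ) × ℝ) (ρ : ℝ), 0 < ρ → ∃ g : Fin N → (Fin n → ℝ) × ℝ,
    (∀ j, g j ∈ pcball z ρ) ∧ pcball z ρ ⊆ ⋃ j, pball (g j) (c * ρ)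

theorem exists_hasParabolicCover {c : ℝ} (hc : 0 < c) : ∃ N, HasParabolicCover n c N := by
  obtain ⟨t, htK, hcov⟩ := (isCompact_pcball (0 : (Fin n → ℝ) × ℝ) 1).elim_nhds_subcover
    (fun w => pball w c) fun w _ => (isOpen_pball w c).mem_nhds (mem_pball_self w hc)
  refine ⟨t.card, fun z ρ hρ => ⟨fun j => pdil z ρ (t.equivFin.symm j), fun j => ?_, ?_⟩⟩
  · exact (pdil_mem_pcball_iff hρ).2 (htK _ (t.equivFin.symm j).2)
  · intro q hq
    obtain ⟨w, rfl⟩ := pdil_surjective z hρ.ne' q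
    obtain ⟨v, hvt, hwv⟩ := Set.mem_iUnion₂.1 (hcov ((pdil_mem_pcball_iff hρ).1 hq))
    refine Set.mem_iUnion.2 ⟨t.equivFin ⟨v, hvt⟩, ?_⟩
    simpa [pdil_mem_pball_pdil_iff hρ] using hwv

def SubadditiveOnPBalls (A : Set ((Fin n → ℝ) × ℝ)) (S : Set ((Fin n → ℝ) × ℝ) → ℝ) : Prop :=
  ∀ (m : ℕ) (ρ : ℝ), 0 < ρ → ∀ (p : (Fin n → ℝ) × ℝ)
    (ρs : Fin m → ℝ), (∀ i, 0 < ρs i) → ∀ (ps : Fin m → (Fin n → ℝ) × ℝ),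
    pball p ρ ∩ A ⊆ ⋃ i, (pball (ps i) (ρs i) ∩ A) →
    S (pball p ρ ∩ A) ≤ ∑ i, S (pball (ps i) (ρs i) ∩ A)

def MonotoneOnPBalls (A : Set ((Fin n → ℝ) × ℝ)) (S : Set ((Fin n → ℝ) × ℝ) → ℝ) : Prop :=
  ∀ ρ₁ ρ₂ : ℝ, 0 < ρ₁ → 0 < ρ₂ → ∀ p₁ p₂,
    pball p₁ ρ₁ ∩ A ⊆ pball p₂ ρ₂ ∩ A → S (pball p₁ ρ₁ ∩ A) ≤ S (pball p₂ ρ₂ ∩ A)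

variable {A : Set ((Fin n → ℝ) × ℝ)} {S : Set ((Fin n → ℝ) × ℝ) → ℝ}

theorem le_mul_of_hasParabolicCover (hS : SubadditiveOnPBalls A S) {c : ℝ} (hc : 0 < c) {N : ℕ}
    (hN : HasParabolicCover n c N) {z : (Fin n → ℝ) × ℝ} {ρ b : ℝ} (hρ : 0 < ρ)
    (hb : ∀ w ∈ pcball z ρ, S (pball w (c * ρ) ∩ A) ≤ b) : S (pball z ρ ∩ A) ≤ N * b := by
  obtain ⟨g, hg, hcov⟩ := hN z ρ hρ
  have hcovA : pball z ρ ∩ A ⊆ ⋃ j, (pball (g j) (c * ρ) ∩ A) := by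
    rw [← Set.iUnion_inter]
    exact Set.inter_subset_inter_left A ((pball_subset_pcball z ρ).trans hcov)
  calc S (pball z ρ ∩ A) ≤ ∑ j, S (pball (g j) (c * ρ) ∩ A) :=
        hS N ρ hρ z _ (fun _ => mul_pos hc hρ) g hcovA
    _ ≤ ∑ _j : Fin N, b := Finset.sum_le_sum fun j _ => hb _ (hg j)
    _ = N * b := by simp

theorem le_half_pow_mul_add_of_absorption (hS : SubadditiveOnPBalls A S) {θ δ : ℝ} {N : ℕ}
    (hθ : 0 < θ) (hN : HasParabolicCover n θ N) (hδ : 0 ≤ δ) (hδN : δ * N ≤ 1 / 2)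
    {p₀ : (Fin n → ℝ) × ℝ} {r σ b e : ℝ} (hσ : 0 < σ) (hb : 0 ≤ b) (he : 0 ≤ e)
    (habs : ∀ z ∈ pcball p₀ (r - σ), S (pball z (θ * σ) ∩ A) ≤ δ * S (pball z σ ∩ A) + e)
    (hbase : ∀ z ∈ pcball p₀ r, S (pball z (θ * σ) ∩ A) ≤ b) (s : ℕ) :
    ∀ z ∈ pcball p₀ (r - s * σ), S (pball z (θ * σ) ∩ A) ≤ (1 / 2) ^ s * b + 2 * e := by
  induction s with
  | zero =>
    intro z hz
    have := hbase z (by simpa using hz)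
    simp only [pow_zero, one_mul]
    linarith
  | succ s ih =>
    intro z hz
    have hX : 0 ≤ (1 / 2 : ℝ) ^ s * b + 2 * e := by positivity
    have hcover : S (pball z σ ∩ A) ≤ N * ((1 / 2) ^ s * b + 2 * e) :=
      le_mul_of_hasParabolicCover hS hθ hN hσ fun w hw =>
        ih w (pcball_mono p₀ (by push_cast; linarith) (mem_pcball_add hz hw))
    have hs : (0 : ℝ) ≤ s := s.cast_nonneg
    calc S (pball z (θ * σ) ∩ A) ≤ δ * S (pball z σ ∩ A) + e :=
          habs z (pcball_mono p₀ (by push_cast; nlinarith) hz)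
      _ ≤ δ * N * ((1 / 2) ^ s * b + 2 * e) + e := by rw [mul_assoc]; gcongr
      _ ≤ 1 / 2 * ((1 / 2) ^ s * b + 2 * e) + e := by gcongr
      _ = (1 / 2) ^ (s + 1) * b + 2 * e := by ring

theorem le_pow_mul_add_of_absorption (hS : SubadditiveOnPBalls A S) {θ δ : ℝ} {N N' m : ℕ}
    (hθ₀ : 0 < θ) (hθ₁ : θ ≤ 1) (hN : HasParabolicCover n θ N)
    (hN' : HasParabolicCover n (1 / 2) N') (hδ : 0 ≤ δ) (hδN : δ * N ≤ 1 / 2)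
    {p₀ : (Fin n → ℝ) × ℝ} {R σ₀ M : ℝ} (hM : 0 ≤ M) {e : ℝ → ℝ} (he₀ : ∀ σ, 0 < σ → 0 ≤ e σ)
    (he : ∀ σ, 0 < σ → 2 * (N' / 2 ^ m) * e (σ / 2) ≤ e σ)
    (habs : ∀ σ, 0 < σ → σ ≤ σ₀ → ∀ z ∈ pcball p₀ (R - σ),
      S (pball z (θ * σ) ∩ A) ≤ δ * S (pball z σ ∩ A) + e σ)
    (hbase : ∀ σ, 0 < σ → σ ≤ σ₀ → ∀ z ∈ pcball p₀ (R - σ), S (pball z (θ * σ) ∩ A) ≤ M)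
    (L : ℕ) : ∀ σ, 0 < σ → σ ≤ σ₀ → ∀ z ∈ pcball p₀ (R - (2 * m + 2) * σ),
      S (pball z (θ * σ) ∩ A) ≤ (N' / 2 ^ m) ^ L * M + 4 * e σ := by
  set β : ℝ := N' / 2 ^ m
  have hm : (0 : ℝ) ≤ m := m.cast_nonneg
  induction L with
  | zero =>
    intro σ hσ hσ₀ z hz
    have := hbase σ hσ hσ₀ z (pcball_mono p₀ (by nlinarith) hz)
    have := he₀ σ hσ
    simp only [pow_zero, one_mul]
    linarith
  | succ L ih =>
    intro σ hσ hσ₀ z hz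
    have hB : 0 ≤ β ^ L * M + 4 * e (σ / 2) := by
      have := he₀ (σ / 2) (by positivity)
      positivity
    have hhalf : ∀ w ∈ pcball p₀ (R - (m + 2) * σ), S (pball w (θ * σ) ∩ A) ≤
        N' * (β ^ L * M + 4 * e (σ / 2)) := fun w hw =>
      le_mul_of_hasParabolicCover hS (by norm_num) hN' (by positivity) fun v hv => by
        rw [show 1 / 2 * (θ * σ) = θ * (σ / 2) by ring]
        exact ih (σ / 2) (by positivity) (by linarith) v
          (pcball_mono p₀ (by nlinarith) (mem_pcball_add hw hv))
    have hfix := le_half_pow_mul_add_of_absorption hS hθ₀ hN hδ hδN hσ (by positivity)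
      (he₀ σ hσ) (fun w hw => habs σ hσ hσ₀ w (pcball_mono p₀ (by nlinarith) hw)) hhalf m z
      (by convert hz using 2; ring)
    calc S (pball z (θ * σ) ∩ A)
        ≤ (1 / 2) ^ m * (N' * (β ^ L * M + 4 * e (σ / 2))) + 2 * e σ := hfix
      _ = β ^ (L + 1) * M + 2 * (2 * β * e (σ / 2)) + 2 * e σ := by
        rw [one_div_pow]; simp only [β]; ring
      _ ≤ β ^ (L + 1) * M + 4 * e σ := by linarith [he σ hσ]

theorem le_of_forall_le_pow_mul_add {x β M c : ℝ} (hβ₀ : 0 ≤ β) (hβ₁ : β < 1)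
    (h : ∀ L : ℕ, x ≤ β ^ L * M + c) : x ≤ c :=
  ge_of_tendsto
    (by simpa using ((tendsto_pow_atTop_nhds_zero_of_lt_one hβ₀ hβ₁).mul_const M).add_const c)
    (Filter.Eventually.of_forall h)

theorem le_mul_add_rpow_neg_mul {ρ k δ x y E : ℝ} (hρ : 0 < ρ)
    (h : ρ ^ k * x ≤ δ * (ρ ^ k * y) + E) : x ≤ δ * y + ρ ^ (-k) * E := by
  have hk : 0 < ρ ^ k := Real.rpow_pos_of_pos hρ k
  rw [Real.rpow_neg hρ.le, inv_mul_eq_div, ← sub_le_iff_le_add', le_div_iff₀ hk]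
  linarith

theorem rpow_mul_le_of_absorption {θ δ τ k E R : ℝ} {N N' N₀ m : ℕ} (hθ₀ : 0 < θ)
    (hθ₁ : θ ≤ 1) (hN : HasParabolicCover n θ N) (hN' : HasParabolicCover n (1 / 2) N')
    (hN₀ : HasParabolicCover n τ N₀) (hδ : 0 ≤ δ) (hδN : δ * N ≤ 1 / 2)
    (hβ₁ : (N' / 2 ^ m : ℝ) < 1) (hβk : 2 * (N' / 2 ^ m : ℝ) * 2 ^ k ≤ 1) (hτ : 0 < τ)
    (hτθ : (2 * m + 2) * τ ≤ 1 - θ) (hR : 0 < R) (hE : 0 ≤ E) {p₀ : (Fin n → ℝ) × ℝ}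
    (hM : 0 ≤ S (pball p₀ R ∩ A)) (hmono : MonotoneOnPBalls A S) (hS : SubadditiveOnPBalls A S)
    (habs : ∀ (ρ : ℝ) (y : (Fin n → ℝ) × ℝ), 0 < ρ → ρ ≤ τ * R →
      pball y ρ ∩ A ⊆ pball p₀ R ∩ A →
      ρ ^ k * S (pball y (θ * ρ) ∩ A) ≤ δ * (ρ ^ k * S (pball y ρ ∩ A)) + E) :
    R ^ k * S (pball p₀ (θ * R) ∩ A) ≤ 4 * N₀ * τ ^ (-k) * E := by
  have hinside : ∀ σ, ∀ z ∈ pcball p₀ (R - σ), pball z σ ∩ A ⊆ pball p₀ R ∩ A := fun σ z hz =>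
    Set.inter_subset_inter_left A
      ((pball_subset_pball_of_mem_pcball hz).trans (by rw [add_sub_cancel]))
  have habs' : ∀ σ, 0 < σ → σ ≤ τ * R → ∀ z ∈ pcball p₀ (R - σ),
      S (pball z (θ * σ) ∩ A) ≤ δ * S (pball z σ ∩ A) + σ ^ (-k) * E :=
    fun σ hσ hστ z hz => le_mul_add_rpow_neg_mul hσ (habs σ z hσ hστ (hinside σ z hz))
  have hbase : ∀ σ, 0 < σ → ∀ z ∈ pcball p₀ (R - σ),
      S (pball z (θ * σ) ∩ A) ≤ S (pball p₀ R ∩ A) := fun σ hσ z hz =>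
    hmono _ R (by positivity) hR z p₀ ((Set.inter_subset_inter_left A
      (pball_mono z (mul_le_of_le_one_left hσ.le hθ₁))).trans (hinside σ z hz))
  have he : ∀ σ, 0 < σ → 2 * (N' / 2 ^ m) * ((σ / 2) ^ (-k) * E) ≤ σ ^ (-k) * E := fun σ hσ => by
    have : 0 ≤ σ ^ (-k) * E := by positivity
    calc 2 * (N' / 2 ^ m) * ((σ / 2) ^ (-k) * E)
        = 2 * (N' / 2 ^ m) * 2 ^ k * (σ ^ (-k) * E) := by
          rw [Real.div_rpow hσ.le zero_le_two, Real.rpow_neg zero_le_two, div_inv_eq_mul]; ring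
      _ ≤ σ ^ (-k) * E := mul_le_of_le_one_left this hβk
  have hlocal : ∀ z ∈ pcball p₀ (θ * R),
      S (pball z (θ * (τ * R)) ∩ A) ≤ 4 * ((τ * R) ^ (-k) * E) := fun z hz =>
    le_of_forall_le_pow_mul_add (by positivity) hβ₁ fun L =>
      le_pow_mul_add_of_absorption hS hθ₀ hθ₁ hN hN' hδ hδN hM (fun σ hσ => by positivity) he
        habs' (fun σ hσ _ => hbase σ hσ) L (τ * R) (by positivity) le_rfl z
        (pcball_mono p₀ (by nlinarith) hz)
  have hcover : S (pball p₀ (θ * R) ∩ A) ≤ N₀ * (4 * ((τ * R) ^ (-k) * E)) :=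
    le_mul_of_hasParabolicCover hS hτ hN₀ (by positivity) fun w hw => by
      rw [show τ * (θ * R) = θ * (τ * R) by ring]
      exact hlocal w hw
  calc R ^ k * S (pball p₀ (θ * R) ∩ A) ≤ R ^ k * (N₀ * (4 * ((τ * R) ^ (-k) * E))) := by
        gcongr
    _ = 4 * N₀ * τ ^ (-k) * E := by
      rw [Real.mul_rpow hτ.le hR.le, Real.rpow_neg hR.le]
      field_simp

end SimonAbsorption

open SimonAbsorption in
/-- (Simon's Absorption Lemma) For `Ω_ρ(p) := U_ρ(p) ∩ A` with `A` convex and `S` a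
nonnegative, monotone, subadditive set function on the truncated parabolic balls:
there is `δ = δ(n,θ) > 0` and, for each `k ∈ ℝ` and `ν ∈ (0,1]`, a constant
`C = C(n,k,ν,θ)` such that whenever `ρ^k S(Ω_{θρ}(y)) ≤ δ ρ^k S(Ω_ρ(y)) + E` for all
`Ω_ρ(y) ⊆ Ω_R(p₀)` with `0 < ρ ≤ νR`, then `R^k S(Ω_{θR}(p₀)) ≤ C E`. -/
theorem simons_absorption_lemma (n : ℕ) (θ : ℝ) (hθ : θ ∈ Set.Ioo (0:ℝ) 1) :
    ∃ δ > (0:ℝ), ∀ (k ν : ℝ), ν ∈ Set.Ioc (0:ℝ) 1 →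
      ∃ C > (0:ℝ),
        ∀ (R : ℝ), 0 < R → ∀ (p₀ : (Fin n → ℝ) × ℝ) (A : Set ((Fin n → ℝ) × ℝ)),
          Convex ℝ A →
          ∀ (S : Set ((Fin n → ℝ) × ℝ) → ℝ) (E : ℝ), 0 < E →
          -- `S` is nonnegative on the class of truncated parabolic balls
          (∀ ρ : ℝ, 0 < ρ → ∀ p, 0 ≤ S (pball p ρ ∩ A)) →
          -- `S` is monotone on the class
          (∀ ρ₁ ρ₂ : ℝ, 0 < ρ₁ → 0 < ρ₂ → ∀ p₁ p₂,
              pball p₁ ρ₁ ∩ A ⊆ pball p₂ ρ₂ ∩ A →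
              S (pball p₁ ρ₁ ∩ A) ≤ S (pball p₂ ρ₂ ∩ A)) →
          -- `S` is subadditive on the class
          (∀ (m : ℕ) (ρ : ℝ), 0 < ρ → ∀ (p : (Fin n → ℝ) × ℝ)
              (ρs : Fin m → ℝ), (∀ i, 0 < ρs i) → ∀ (ps : Fin m → (Fin n → ℝ) × ℝ),
              pball p ρ ∩ A ⊆ ⋃ i, (pball (ps i) (ρs i) ∩ A) →
              S (pball p ρ ∩ A) ≤ ∑ i, S (pball (ps i) (ρs i) ∩ A)) →
          -- the absorption hypothesis
          (∀ (ρ : ℝ) (y : (Fin n → ℝ) × ℝ), 0 < ρ → ρ ≤ ν * R →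
              pball y ρ ∩ A ⊆ pball p₀ R ∩ A →
              ρ ^ k * S (pball y (θ * ρ) ∩ A) ≤ δ * (ρ ^ k * S (pball y ρ ∩ A)) + E) →
          R ^ k * S (pball p₀ (θ * R) ∩ A) ≤ C * E := by
  obtain ⟨hθ₀, hθ₁⟩ := hθ
  obtain ⟨N, hN⟩ := exists_hasParabolicCover (n := n) hθ₀
  refine ⟨1 / (2 * (N + 1)), by positivity, fun k ν hν => ?_⟩
  have hδN : 1 / (2 * (N + 1)) * (N : ℝ) ≤ 1 / 2 := by
    rw [div_mul_eq_mul_div, div_le_div_iff₀ (by positivity) two_pos]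
    linarith
  obtain ⟨N', hN'⟩ := exists_hasParabolicCover (n := n) (c := 1 / 2) (by norm_num)
  obtain ⟨m, hm⟩ := pow_unbounded_of_one_lt (2 * N' * (1 + 2 ^ k) : ℝ) one_lt_two
  have h2k : (0 : ℝ) < 2 ^ k := by positivity
  have hβ₁ : (N' / 2 ^ m : ℝ) < 1 := by rw [div_lt_one (by positivity)]; nlinarith
  have hβk : 2 * (N' / 2 ^ m : ℝ) * 2 ^ k ≤ 1 := by
    rw [mul_div_assoc', div_mul_eq_mul_div, div_le_one (by positivity)]
    nlinarith
  set τ := min ν ((1 - θ) / (2 * m + 2))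
  have hτ : 0 < τ := lt_min hν.1 (div_pos (by linarith) (by positivity))
  have hτθ : (2 * m + 2) * τ ≤ 1 - θ := (le_div_iff₀' (by positivity)).1 (min_le_right _ _)
  obtain ⟨N₀, hN₀⟩ := exists_hasParabolicCover (n := n) hτ
  refine ⟨4 * (N₀ + 1) * τ ^ (-k), by positivity, fun R hR p₀ A _ S E hE hS₀ hmono hS habs => ?_⟩
  calc R ^ k * S (pball p₀ (θ * R) ∩ A) ≤ 4 * N₀ * τ ^ (-k) * E :=
      rpow_mul_le_of_absorption hθ₀ hθ₁.le hN hN' hN₀ (by positivity) hδN hβ₁ hβk hτ hτθ hR hE.le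
        (hS₀ R hR p₀) hmono hS
        fun ρ y hρ hρτ => habs ρ y hρ (hρτ.trans (by gcongr; exact min_le_left _ _))
    _ ≤ 4 * (N₀ + 1) * τ ^ (-k) * E := by gcongr; linarith
end

section
/- (Method of Continuity) Let B be a Banach space, V a normed vector space, and L₀, L₁ bounded linear operators from B to V. For t ∈ [0,1] set L_t := (1−t)L₀ + tL₁, and suppose there is a constant C such that ‖x‖_B ≤ C‖L_t x‖_V for all x ∈ B and all t ∈ [0,1]. Then L₀ is surjective if and only if L₁ is surjective. -/
open Set Function

private lemma moc_aux {P : ℝ → Prop} {ε : ℝ} (hε : 0 < ε)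
    (step : ∀ s ∈ Icc (0:ℝ) 1, ∀ t ∈ Icc (0:ℝ) 1, |t - s| ≤ ε → P s → P t)
    (h0 : P 0) : P 1 := by
  have key : ∀ n : ℕ, ∀ t ∈ Icc (0:ℝ) 1, t ≤ n * ε → P t := by
    intro n
    induction n with
    | zero =>
      intro t ht hle
      have : t = 0 := le_antisymm (by simpa using hle) ht.1
      rw [this]; exact h0
    | succ n ih =>
      intro t ht hle
      have h1 : (0:ℝ) ≤ t := ht.1
      have h2 : t ≤ 1 := ht.2
      have hnn : (0:ℝ) ≤ n * ε := by positivity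
      have hle' : t ≤ n * ε + ε := by push_cast at hle; linarith
      have hsmem : max (t - ε) 0 ∈ Icc (0:ℝ) 1 :=
        ⟨le_max_right _ _, max_le (by linarith) (by linarith)⟩
      have hsn : max (t - ε) 0 ≤ n * ε := max_le (by linarith) hnn
      refine step _ hsmem t ht ?_ (ih _ hsmem hsn)
      have hl : t - ε ≤ max (t - ε) 0 := le_max_left _ _
      have hr : max (t - ε) 0 ≤ t := max_le (by linarith) h1
      rw [abs_le]; constructor <;> linarith
  obtain ⟨n, hn⟩ := exists_nat_ge (1 / ε)
  refine key n 1 ⟨zero_le_one, le_refl 1⟩ ?_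
  rw [div_le_iff₀ hε] at hn
  linarith

private lemma moc_mp
    {B V : Type*} [NormedAddCommGroup B] [NormedSpace ℝ B] [CompleteSpace B]
    [NormedAddCommGroup V] [NormedSpace ℝ V]
    (L₀ L₁ : B →L[ℝ] V) (C : ℝ)
    (hC : ∀ t ∈ Set.Icc (0:ℝ) 1, ∀ x : B, ‖x‖ ≤ C * ‖((1 - t) • L₀ + t • L₁) x‖)
    (h0 : Function.Surjective (⇑L₀)) : Function.Surjective (⇑L₁) := by
  set C' := max C 0 with hC'def
  have hC'nn : 0 ≤ C' := le_max_right _ _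
  have hC' : ∀ t ∈ Set.Icc (0:ℝ) 1, ∀ x : B, ‖x‖ ≤ C' * ‖((1 - t) • L₀ + t • L₁) x‖ :=
    fun t ht x => (hC t ht x).trans
      (mul_le_mul_of_nonneg_right (le_max_left _ _) (norm_nonneg _))
  set D := L₁ - L₀ with hD
  set a := C' * ‖D‖ with ha
  have hann : 0 ≤ a := mul_nonneg hC'nn (norm_nonneg _)
  set ε := 1 / (2 * (a + 1)) with hε
  have hεpos : 0 < ε := by positivity
  have hεa : ε * a ≤ 1 / 2 := by
    rw [hε, div_mul_eq_mul_div, div_le_div_iff₀ (by positivity) (by norm_num)]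
    nlinarith
  have step : ∀ s ∈ Icc (0:ℝ) 1, ∀ t ∈ Icc (0:ℝ) 1, |t - s| ≤ ε →
      Surjective ⇑((1 - s) • L₀ + s • L₁) → Surjective ⇑((1 - t) • L₀ + t • L₁) := by
    intro s hs t ht hts hsurj
    set Ls := (1 - s) • L₀ + s • L₁ with hLs
    have hdecomp : ((1 - t) • L₀ + t • L₁) = Ls + (t - s) • D := by
      ext x
      simp only [hLs, hD, ContinuousLinearMap.add_apply, ContinuousLinearMap.coe_smul',
        Pi.smul_apply, ContinuousLinearMap.coe_sub', Pi.sub_apply]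
      module
    intro y
    have hgspec : ∀ z, Ls (Classical.choose (hsurj z)) = z :=
      fun z => Classical.choose_spec (hsurj z)
    set g : V → B := fun z => Classical.choose (hsurj z) with hg
    set Φ : B → B := fun x => g (y - (t - s) • D x) with hΦ
    have hlip : LipschitzWith (1/2) Φ := by
      apply LipschitzWith.of_dist_le_mul
      intro x x'
      rw [dist_eq_norm, dist_eq_norm]
      calc ‖Φ x - Φ x'‖ ≤ C' * ‖Ls (Φ x - Φ x')‖ := hC' s hs _
        _ = C' * ‖(t - s) • (D x' - D x)‖ := by
            rw [map_sub]
            show C' * ‖Ls (g _) - Ls (g _)‖ = _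
            rw [hgspec, hgspec]
            congr 1
            rw [smul_sub]
            abel_nf
        _ = C' * (|t - s| * ‖D x' - D x‖) := by rw [norm_smul, Real.norm_eq_abs]
        _ ≤ C' * (ε * (‖D‖ * ‖x' - x‖)) := by
            refine mul_le_mul_of_nonneg_left ?_ hC'nn
            refine mul_le_mul hts ?_ (norm_nonneg _) hεpos.le
            calc ‖D x' - D x‖ = ‖D (x' - x)‖ := by rw [map_sub]
              _ ≤ ‖D‖ * ‖x' - x‖ := D.le_opNorm _
        _ = (ε * a) * ‖x' - x‖ := by ring
        _ ≤ (1/2) * ‖x - x'‖ := by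
            rw [norm_sub_rev]
            exact mul_le_mul_of_nonneg_right hεa (norm_nonneg _)
        _ = ((1/2 : NNReal) : ℝ) * ‖x - x'‖ := by norm_num
    have hcon : ContractingWith (1/2) Φ := ⟨by rw [← NNReal.coe_lt_coe]; norm_num, hlip⟩
    refine ⟨hcon.fixedPoint Φ, ?_⟩
    have hfix : Φ (hcon.fixedPoint Φ) = hcon.fixedPoint Φ := hcon.fixedPoint_isFixedPt
    set x := hcon.fixedPoint Φ
    have hLsx : Ls x = y - (t - s) • D x := by
      conv_lhs => rw [← hfix]
      exact hgspec _
    rw [hdecomp]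
    show Ls x + (t - s) • D x = y
    rw [hLsx]; abel
  have h0' : Surjective ⇑((1 - (0:ℝ)) • L₀ + (0:ℝ) • L₁) := by
    simpa using h0
  have h1' := moc_aux hεpos step h0'
  simpa using h1'

/-- (Method of Continuity) Let `B` be a Banach space, `V` a normed space, `L₀ L₁ : B →L V`
bounded linear operators, `L_t := (1−t)L₀ + tL₁`, and suppose `‖x‖ ≤ C ‖L_t x‖` for all
`x ∈ B` and `t ∈ [0,1]`. Then `L₀` is surjective iff `L₁` is surjective. -/
theorem method_of_continuity
    {B V : Type*} [NormedAddCommGroup B] [NormedSpace ℝ B] [CompleteSpace B]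
    [NormedAddCommGroup V] [NormedSpace ℝ V]
    (L₀ L₁ : B →L[ℝ] V) (C : ℝ)
    (hC : ∀ t ∈ Set.Icc (0:ℝ) 1, ∀ x : B, ‖x‖ ≤ C * ‖((1 - t) • L₀ + t • L₁) x‖) :
    Function.Surjective (⇑L₀) ↔ Function.Surjective (⇑L₁) := by
  constructor
  · exact moc_mp L₀ L₁ C hC
  · refine moc_mp L₁ L₀ C ?_
    intro t ht x
    have h := hC (1 - t) ⟨by linarith [ht.2], by linarith [ht.1]⟩ x
    have heq : ((1 - (1 - t)) • L₀ + (1 - t) • L₁) = ((1 - t) • L₁ + t • L₀) := by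
      ext z
      simp only [ContinuousLinearMap.add_apply, ContinuousLinearMap.coe_smul',
        Pi.smul_apply]
      module
    rw [heq] at h
    exact h
end
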